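/- The group-wise soft-thresholding formula solves the single-group sparse group lasso subproblem: for v ∈ ℝ^d and λ, η ≥ 0, the unique minimizer of ½‖x − v‖₂² + λ‖x‖₁ + η‖x‖₂ over ℝ^d is x* = max(‖v^λ‖₂ − η, 0) · v^λ/‖v^λ‖₂ when v^λ ≠ 0, and x* = 0 when v^λ = 0, where v^λ is the coordinatewise soft-thresholding v^λ_j = sign(v_j)·max(|v_j| − λ, 0). -/

import Mathlib

/-!
Write `f(x) = ½‖x - v‖² + g(x)` with `g = λ‖·‖₁ + η‖·‖₂`. Expanding the square gives
`f(x) ≥ f(p) + ½‖x - p‖²` as soon as `v - p` is a subgradient of `g` at `p`, which yields both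
minimality and uniqueness of `p`. For `p = x*` split `v - p = (v - v^λ) + (v^λ - p)`. The first
summand has coordinates in `[-λ, λ]` and satisfies `(v_j - v^λ_j) v^λ_j = λ |v^λ_j|`, so it is a
subgradient of `λ‖·‖₁` at every nonnegative multiple of `v^λ`. The second is `(1 - c) v^λ` with
`c = max(‖v^λ‖ - η, 0) / ‖v^λ‖`; its norm is `min(‖v^λ‖, η) ≤ η`, with equality when `p ≠ 0`,
so it is a subgradient of `η‖·‖₂` at `p`.
-/

open Finset Real WithLp RealInnerProductSpace

noncomputable def softThreshold (lam t : ℝ) : ℝ := Real.sign t * max (|t| - lam) 0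

theorem abs_sub_softThreshold_le {lam : ℝ} (hlam : 0 ≤ lam) (t : ℝ) :
    |t - softThreshold lam t| ≤ lam := by
  unfold softThreshold
  rcases lt_trichotomy t 0 with ht | rfl | ht
  · rw [sign_of_neg ht, abs_of_neg ht, abs_le]
    constructor <;> cases max_cases (-t - lam) 0 <;> linarith
  · simpa using hlam
  · rw [sign_of_pos ht, abs_of_pos ht, abs_le]
    constructor <;> cases max_cases (t - lam) 0 <;> linarith

theorem sub_softThreshold_mul_self (lam t : ℝ) :
    (t - softThreshold lam t) * softThreshold lam t = lam * |softThreshold lam t| := by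
  unfold softThreshold
  rcases lt_trichotomy t 0 with ht | rfl | ht
  · rw [sign_of_neg ht, abs_of_neg ht]
    rcases max_cases (-t - lam) 0 with ⟨h, h'⟩ | ⟨h, -⟩
    · rw [h, neg_one_mul, abs_neg, abs_of_nonneg (h ▸ h')]; ring
    · simp [h]
  · simp
  · rw [sign_of_pos ht, abs_of_pos ht]
    rcases max_cases (t - lam) 0 with ⟨h, h'⟩ | ⟨h, -⟩
    · rw [h, one_mul, abs_of_nonneg (h ▸ h')]; ring
    · simp [h]

section InnerProductSpace

variable {E : Type*} [NormedAddCommGroup E] [InnerProductSpace ℝ E]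

theorem half_sq_norm_sub_add_le_of_subgradient {g : E → ℝ} {v p : E}
    (hg : ∀ x, g p + ⟪v - p, x - p⟫ ≤ g x) (x : E) :
    ‖p - v‖ ^ 2 / 2 + g p + ‖x - p‖ ^ 2 / 2 ≤ ‖x - v‖ ^ 2 / 2 + g x := by
  have hsplit : ‖x - v‖ ^ 2 = ‖x - p‖ ^ 2 - 2 * ⟪v - p, x - p⟫ + ‖p - v‖ ^ 2 := by
    rw [show x - v = (x - p) - (v - p) by abel, norm_sub_sq_real, real_inner_comm,
      ← norm_neg (v - p), neg_sub]
  linarith [hg x]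

noncomputable def groupSoftThreshold (η : ℝ) (w : E) : E := (max (‖w‖ - η) 0 / ‖w‖) • w

theorem groupSoftThreshold_subgradient {η : ℝ} (hη : 0 ≤ η) (w x : E) :
    η * ‖groupSoftThreshold η w‖ + ⟪w - groupSoftThreshold η w, x - groupSoftThreshold η w⟫
      ≤ η * ‖x‖ := by
  rcases eq_or_ne w 0 with rfl | hw
  · simp [groupSoftThreshold]; positivity
  set r := ‖w‖ with hr
  set m := max (r - η) 0
  have hr0 : 0 < r := norm_pos_iff.mpr hw
  have hm0 : 0 ≤ m := le_max_right _ _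
  have hmr : m ≤ r := max_le (by linarith) hr0.le
  have hrm : r - m ≤ η := by linarith [le_max_left (r - η) 0]
  -- complementary slackness: `m > 0` forces `r - m = η`
  have hslack : m * (r - m - η) = 0 := by
    rcases max_cases (r - η) 0 with ⟨h, -⟩ | ⟨h, -⟩ <;> simp only [m, h] <;> ring
  have hp : groupSoftThreshold η w = (m / r) • w := rfl
  have hnorm : ‖groupSoftThreshold η w‖ = m := by
    rw [hp, norm_smul, norm_div, Real.norm_of_nonneg hm0, norm_norm, div_mul_cancel₀ _ hr0.ne']
  have hinner : ⟪w - groupSoftThreshold η w, x - groupSoftThreshold η w⟫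
      = (r - m) / r * ⟪w, x⟫ - (r - m) * m := by
    rw [hp, inner_sub_left, inner_sub_right, inner_sub_right, real_inner_smul_left,
      real_inner_smul_right, real_inner_smul_right, real_inner_smul_left,
      real_inner_self_eq_norm_sq, ← hr]
    field_simp
  have hcs : (r - m) / r * ⟪w, x⟫ ≤ (r - m) * ‖x‖ := by
    calc (r - m) / r * ⟪w, x⟫ ≤ (r - m) / r * (r * ‖x‖) :=
          mul_le_mul_of_nonneg_left (real_inner_le_norm w x) (div_nonneg (by linarith) hr0.le)
      _ = (r - m) * ‖x‖ := by field_simp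
  rw [hnorm, hinner]
  linarith [mul_le_mul_of_nonneg_right hrm (norm_nonneg x)]

end InnerProductSpace

section EuclideanSpace

variable {ι : Type*} [Fintype ι]

theorem smul_softThreshold_subgradient {lam : ℝ} (hlam : 0 ≤ lam) {v s : EuclideanSpace ℝ ι}
    (hs : ∀ i, s i = softThreshold lam (v i)) {c : ℝ} (hc : 0 ≤ c) (x : EuclideanSpace ℝ ι) :
    lam * ∑ i, |(c • s) i| + ⟪v - s, x - c • s⟫ ≤ lam * ∑ i, |x i| := by
  simp only [PiLp.inner_apply, RCLike.inner_apply, conj_trivial, PiLp.sub_apply,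
    PiLp.smul_apply, smul_eq_mul, mul_sum, ← sum_add_distrib]
  refine sum_le_sum fun i _ => ?_
  have hbound : (v i - s i) * x i ≤ lam * |x i| := by
    rw [hs]
    calc _ ≤ |v i - softThreshold lam (v i)| * |x i| := by rw [← abs_mul]; exact le_abs_self _
      _ ≤ lam * |x i| := by gcongr; exact abs_sub_softThreshold_le hlam _
  have hexact : (v i - s i) * (c * s i) = lam * |c * s i| := by
    rw [abs_mul, abs_of_nonneg hc, hs, mul_left_comm, sub_softThreshold_mul_self]; ring
  linarith

noncomputable def sparseGroupLassoPenalty (lam η : ℝ) (x : EuclideanSpace ℝ ι) : ℝ :=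
  lam * ∑ i, |x i| + η * ‖x‖

theorem sparseGroupLassoPenalty_subgradient {lam η : ℝ} (hlam : 0 ≤ lam) (hη : 0 ≤ η)
    {v s : EuclideanSpace ℝ ι} (hs : ∀ i, s i = softThreshold lam (v i)) (x : EuclideanSpace ℝ ι) :
    sparseGroupLassoPenalty lam η (groupSoftThreshold η s) +
        ⟪v - groupSoftThreshold η s, x - groupSoftThreshold η s⟫
      ≤ sparseGroupLassoPenalty lam η x := by
  have h1 : lam * ∑ i, |groupSoftThreshold η s i| + ⟪v - s, x - groupSoftThreshold η s⟫
      ≤ lam * ∑ i, |x i| :=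
    smul_softThreshold_subgradient hlam hs (div_nonneg (le_max_right _ _) (norm_nonneg s)) x
  have h2 := groupSoftThreshold_subgradient hη s x
  rw [show v - groupSoftThreshold η s = (v - s) + (s - groupSoftThreshold η s) by abel,
    inner_add_left]
  unfold sparseGroupLassoPenalty
  linarith

theorem half_sum_sq_sub_add_penalty (lam η : ℝ) (v x : ι → ℝ) :
    (1 / 2) * ∑ i, (x i - v i) ^ 2 + lam * ∑ i, |x i| + η * √(∑ i, x i ^ 2)
      = ‖toLp 2 x - toLp 2 v‖ ^ 2 / 2 + sparseGroupLassoPenalty lam η (toLp 2 x) := by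
  rw [EuclideanSpace.real_norm_sq_eq]
  simp [sparseGroupLassoPenalty, EuclideanSpace.norm_eq]
  ring

end EuclideanSpace

theorem groupwise_soft_thresholding_solves_sgl (d : ℕ) (v : Fin d → ℝ)
    (lam η : ℝ) (hlam : 0 ≤ lam) (hη : 0 ≤ η)
    (vlam : Fin d → ℝ) (hvlam : ∀ j, vlam j = Real.sign (v j) * max (|v j| - lam) 0)
    (xstar : Fin d → ℝ)
    (hxstar : xstar = if Real.sqrt (∑ j, vlam j ^ 2) = 0 then 0
      else fun j => max (Real.sqrt (∑ j', vlam j' ^ 2) - η) 0 * vlam j /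
        Real.sqrt (∑ j', vlam j' ^ 2)) :
    ∀ x : Fin d → ℝ,
      ((1 / 2) * ∑ j, (xstar j - v j) ^ 2 + lam * ∑ j, |xstar j| +
          η * Real.sqrt (∑ j, xstar j ^ 2) ≤
        (1 / 2) * ∑ j, (x j - v j) ^ 2 + lam * ∑ j, |x j| +
          η * Real.sqrt (∑ j, x j ^ 2)) ∧
      (((1 / 2) * ∑ j, (x j - v j) ^ 2 + lam * ∑ j, |x j| +
          η * Real.sqrt (∑ j, x j ^ 2) ≤
        (1 / 2) * ∑ j, (xstar j - v j) ^ 2 + lam * ∑ j, |xstar j| +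
          η * Real.sqrt (∑ j, xstar j ^ 2)) → x = xstar) := by
  intro x
  set S : EuclideanSpace ℝ (Fin d) := toLp 2 vlam
  set P := groupSoftThreshold η S
  have hxstar_eq : xstar = ofLp P := by
    have hS : ‖S‖ = √(∑ j, vlam j ^ 2) := by simp [S, EuclideanSpace.norm_eq]
    funext j
    rw [hxstar]
    split_ifs with h <;> simp [P, S, groupSoftThreshold, hS, h, mul_div_right_comm]
  subst hxstar_eq
  have key := half_sq_norm_sub_add_le_of_subgradient
    (sparseGroupLassoPenalty_subgradient hlam hη (v := toLp 2 v) hvlam) (toLp 2 x)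
  simp only [half_sum_sq_sub_add_penalty, toLp_ofLp]
  refine ⟨by linarith [sq_nonneg ‖toLp 2 x - P‖], fun hle => ?_⟩
  have hdist : ‖toLp 2 x - P‖ ^ 2 = 0 := le_antisymm (by linarith) (sq_nonneg _)
  have hxP : toLp 2 x = P := by simpa [sub_eq_zero] using hdist
  exact congrArg ofLp hxP
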